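/- arXiv:1911.02954 — 4 statements merged into one kernel-verified Lean document; each statement's English description precedes it below -/
import Mathlib

section
/- For a nondegenerate symmetric bilinear form σ on ℝ^n all of whose principal k×k minors m_k(σ) (with respect to a fixed basis) are nonzero, the number of negative eigenvalues (the negative index of inertia) equals (1/2)n − (1/2)∑_{k=1}^n sgn(m_k(σ)/m_{k−1}(σ)), where m_0(σ) := 1. -/
open Matrix

def sigDiag (n p : ℕ) : Matrix (Fin n) (Fin n) ℝ :=
  Matrix.diagonal fun i => if (i : ℕ) < p then (1 : ℝ) else -1

def MatHasSig {n : ℕ} (p p' : ℕ) (A : Matrix (Fin n) (Fin n) ℝ) : Prop :=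
  p + p' = n ∧ ∃ P : Matrix (Fin n) (Fin n) ℝ, IsUnit P.det ∧ Pᵀ * A * P = sigDiag n p

/-- The principal `k × k` minor of `A` (equal to `1` for `k = 0`, and to `0` for `k > n`). -/
noncomputable def leadingMinor (n : ℕ) (A : Matrix (Fin n) (Fin n) ℝ) (k : ℕ) : ℝ :=
  if h : k ≤ n then (A.submatrix (Fin.castLE h) (Fin.castLE h)).det else 0

namespace NegIndexAux

open Finset Module Submodule

variable {n : ℕ}

lemma quad_eval (A P : Matrix (Fin n) (Fin n) ℝ) (d : Fin n → ℝ)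
    (h : Pᵀ * A * P = diagonal d) (y : Fin n → ℝ) :
    (P *ᵥ y) ⬝ᵥ (A *ᵥ (P *ᵥ y)) = ∑ i, d i * (y i)^2 := by
  have e1 : P *ᵥ y = y ᵥ* Pᵀ := (Matrix.vecMul_transpose _ _).symm
  have : (P *ᵥ y) ⬝ᵥ (A *ᵥ (P *ᵥ y)) = y ⬝ᵥ ((Pᵀ * A * P) *ᵥ y) := by
    rw [Matrix.mulVec_mulVec, Matrix.dotProduct_mulVec, e1, Matrix.vecMul_vecMul,
      Matrix.dotProduct_mulVec, mul_assoc]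
  rw [this, h]
  simp only [dotProduct, Matrix.mulVec_diagonal]
  exact Finset.sum_congr rfl (fun i _ => by ring)

def stdv (n : ℕ) : Fin n → (Fin n → ℝ) := fun i => Pi.single i 1

def suppSub (S : Finset (Fin n)) : Submodule ℝ (Fin n → ℝ) where
  carrier := {y | ∀ j ∉ S, y j = 0}
  add_mem' := by intro a b ha hb j hj; simp [ha j hj, hb j hj]
  zero_mem' := by intro j hj; rfl
  smul_mem' := by intro c a ha j hj; simp [ha j hj]

noncomputable def spanS (S : Finset (Fin n)) : Submodule ℝ (Fin n → ℝ) :=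
  span ℝ (stdv n '' (S : Set (Fin n)))

lemma span_single_le (S : Finset (Fin n)) : spanS S ≤ suppSub S := by
  rw [spanS, Submodule.span_le]
  rintro _ ⟨i, hi, rfl⟩ j hj
  exact Pi.single_eq_of_ne (fun h => hj (by rw [h]; exact hi)) 1

lemma finrank_spanS (S : Finset (Fin n)) : finrank ℝ (spanS S) = S.card := by
  have li : LinearIndependent ℝ (fun i : ↥S => stdv n i) := by
    have := (Pi.basisFun ℝ (Fin n)).linearIndependent
    have h2 := this.comp (Subtype.val : ↥S → Fin n) Subtype.val_injective
    have he : (⇑(Pi.basisFun ℝ (Fin n)) ∘ (Subtype.val : ↥S → Fin n)) = fun i : ↥S => stdv n i := by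
      funext i; simp [stdv]
    rwa [he] at h2
  have h := finrank_span_eq_card li
  have hr : Set.range (fun i : ↥S => stdv n i) = stdv n '' (S : Set (Fin n)) := by
    rw [show (fun i : ↥S => stdv n i) = stdv n ∘ (Subtype.val : ↥S → Fin n) from rfl,
      Set.range_comp, Subtype.range_val]
  rw [spanS, ← hr, h, Fintype.card_coe]

lemma sylvester_le (A : Matrix (Fin n) (Fin n) ℝ) (d e : Fin n → ℝ)
    (he : ∀ i, e i ≠ 0)
    (P Q : Matrix (Fin n) (Fin n) ℝ) (hP : IsUnit P.det) (hQ : IsUnit Q.det)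
    (h1 : Pᵀ * A * P = diagonal d) (h2 : Qᵀ * A * Q = diagonal e) :
    (univ.filter (fun i => d i < 0)).card ≤ (univ.filter (fun i => e i < 0)).card := by
  by_contra hlt
  push_neg at hlt
  set S := univ.filter (fun i => d i < 0) with hS
  set T := univ.filter (fun i => e i < 0) with hT
  set Tc := univ.filter (fun i => 0 < e i) with hTc
  have hcard : T.card + Tc.card = n := by
    have h0 := Finset.card_filter_add_card_filter_not (s := univ)
      (p := fun i : Fin n => e i < 0)
    have heq : univ.filter (fun i : Fin n => ¬ e i < 0) = Tc := by
      apply Finset.filter_congr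
      intro i _
      simp only [not_lt]
      constructor
      · intro h; exact lt_of_le_of_ne h (Ne.symm (he i))
      · intro h; exact le_of_lt h
    rw [heq] at h0
    simpa using h0
  haveI : Invertible P := P.invertibleOfIsUnitDet hP
  haveI : Invertible Q := Q.invertibleOfIsUnitDet hQ
  set eP := P.toLinearEquiv' ‹Invertible P›
  set eQ := Q.toLinearEquiv' ‹Invertible Q›
  set V := (spanS S).map (eP : (Fin n → ℝ) →ₗ[ℝ] (Fin n → ℝ))
  set W := (spanS Tc).map (eQ : (Fin n → ℝ) →ₗ[ℝ] (Fin n → ℝ))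
  have hV : finrank ℝ V = S.card := by rw [LinearEquiv.finrank_map_eq, finrank_spanS]
  have hW : finrank ℝ W = Tc.card := by rw [LinearEquiv.finrank_map_eq, finrank_spanS]
  have hsup : finrank ℝ (V ⊔ W : Submodule ℝ (Fin n → ℝ)) ≤ n := by
    have := Submodule.finrank_le (V ⊔ W)
    simpa using this
  have hsum := Submodule.finrank_sup_add_finrank_inf_eq V W
  have hpos : 0 < finrank ℝ (V ⊓ W : Submodule ℝ (Fin n → ℝ)) := by omega
  have hne : (V ⊓ W : Submodule ℝ (Fin n → ℝ)) ≠ ⊥ := by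
    intro hb
    rw [hb, finrank_bot] at hpos
    exact lt_irrefl 0 hpos
  obtain ⟨x, hx, hx0⟩ := Submodule.exists_mem_ne_zero_of_ne_bot hne
  obtain ⟨⟨y, hy, hxy⟩, ⟨z, hz, hxz⟩⟩ := hx
  have hPy : P *ᵥ y = x := by simpa [eP, Matrix.toLinearEquiv'_apply, Matrix.toLin'_apply] using hxy
  have hQz : Q *ᵥ z = x := by simpa [eQ, Matrix.toLinearEquiv'_apply, Matrix.toLin'_apply] using hxz
  have hy0 : y ≠ 0 := by rintro rfl; simp at hPy; exact hx0 hPy.symm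
  have hyS : ∀ j ∉ S, y j = 0 := span_single_le S hy
  have hzT : ∀ j ∉ Tc, z j = 0 := span_single_le Tc hz
  have hq1 : x ⬝ᵥ (A *ᵥ x) = ∑ i, d i * (y i)^2 := by rw [← hPy]; exact quad_eval A P d h1 y
  have hq2 : x ⬝ᵥ (A *ᵥ x) = ∑ i, e i * (z i)^2 := by rw [← hQz]; exact quad_eval A Q e h2 z
  obtain ⟨i₀, hi₀⟩ : ∃ i, y i ≠ 0 := by
    by_contra hc; push_neg at hc; exact hy0 (funext hc)
  have hi₀S : i₀ ∈ S := by
    by_contra hc; exact hi₀ (hyS i₀ hc)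
  have hneg : x ⬝ᵥ (A *ᵥ x) < 0 := by
    rw [hq1]
    have : ∑ i, d i * (y i)^2 < ∑ _i : Fin n, (0:ℝ) := by
      apply Finset.sum_lt_sum
      · intro i _
        by_cases hyi : y i = 0
        · simp [hyi]
        · have hiS : i ∈ S := by by_contra hc; exact hyi (hyS i hc)
          have hdi : d i < 0 := by simpa [hS] using hiS
          nlinarith [sq_nonneg (y i)]
      · refine ⟨i₀, Finset.mem_univ _, ?_⟩
        have hdi : d i₀ < 0 := by simpa [hS] using hi₀S
        have : (0:ℝ) < (y i₀)^2 := by positivity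
        nlinarith
    simpa using this
  have hnonneg : 0 ≤ x ⬝ᵥ (A *ᵥ x) := by
    rw [hq2]
    apply Finset.sum_nonneg
    intro i _
    by_cases hzi : z i = 0
    · simp [hzi]
    · have hiT : i ∈ Tc := by by_contra hc; exact hzi (hzT i hc)
      have hei : 0 < e i := by simpa [hTc] using hiT
      positivity
  linarith

theorem sylvester_card (A : Matrix (Fin n) (Fin n) ℝ) (d e : Fin n → ℝ)
    (hd : ∀ i, d i ≠ 0) (he : ∀ i, e i ≠ 0)
    (P Q : Matrix (Fin n) (Fin n) ℝ) (hP : IsUnit P.det) (hQ : IsUnit Q.det)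
    (h1 : Pᵀ * A * P = diagonal d) (h2 : Qᵀ * A * Q = diagonal e) :
    (univ.filter (fun i => d i < 0)).card = (univ.filter (fun i => e i < 0)).card :=
  le_antisymm (sylvester_le A d e he P Q hP hQ h1 h2)
    (sylvester_le A e d hd Q P hQ hP h2 h1)

lemma leadingMinor_zero (n : ℕ) (A : Matrix (Fin n) (Fin n) ℝ) : leadingMinor n A 0 = 1 := by
  rw [leadingMinor, dif_pos (Nat.zero_le n)]
  exact Matrix.det_isEmpty

lemma leadingMinor_self (n : ℕ) (A : Matrix (Fin n) (Fin n) ℝ) : leadingMinor n A n = A.det := by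
  rw [leadingMinor, dif_pos (le_refl n)]
  congr 1

lemma leadingMinor_castSucc (n : ℕ) (A : Matrix (Fin (n+1)) (Fin (n+1)) ℝ) (k : ℕ) (hk : k ≤ n) :
    leadingMinor n (A.submatrix Fin.castSucc Fin.castSucc) k = leadingMinor (n+1) A k := by
  rw [leadingMinor, leadingMinor, dif_pos hk, dif_pos (hk.trans n.le_succ)]
  congr 1

lemma jacobi (n : ℕ) (A : Matrix (Fin n) (Fin n) ℝ) (hsym : A.IsSymm)
    (hm : ∀ k, 1 ≤ k → k ≤ n → leadingMinor n A k ≠ 0) :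
    ∃ P : Matrix (Fin n) (Fin n) ℝ, IsUnit P.det ∧
      Pᵀ * A * P = diagonal (fun i : Fin n => leadingMinor n A (i+1) / leadingMinor n A (i : ℕ)) := by
  induction n with
  | zero =>
    exact ⟨1, by simp, by ext i; exact i.elim0⟩
  | succ n ih =>
    set B := A.submatrix Fin.castSucc Fin.castSucc with hBdef
    have hBsym : B.IsSymm := by
      ext i j
      simp only [hBdef, Matrix.transpose_apply, Matrix.submatrix_apply]
      exact hsym.apply _ _
    have hdetB : B.det = leadingMinor (n+1) A n := by
      rw [← leadingMinor_castSucc n A n (le_refl n), leadingMinor_self]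
    have hdetB0 : B.det ≠ 0 := by
      rcases Nat.eq_zero_or_pos n with h0 | h0
      · subst h0; rw [Matrix.det_isEmpty]; exact one_ne_zero
      · rw [hdetB]; exact hm n h0 n.le_succ
    have hdetBu : IsUnit B.det := isUnit_iff_ne_zero.mpr hdetB0
    obtain ⟨Q, hQu, hQ⟩ := ih B hBsym (fun k h1 h2 => by
      rw [leadingMinor_castSucc n A k h2]; exact hm k h1 (h2.trans n.le_succ))
    haveI : Invertible B := B.invertibleOfIsUnitDet hdetBu
    have hBinv1 : B * B⁻¹ = 1 := Matrix.mul_nonsing_inv B hdetBu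
    have hBinv2 : B⁻¹ * B = 1 := Matrix.nonsing_inv_mul B hdetBu
    have hBinvT : B⁻¹ᵀ = B⁻¹ := by rw [Matrix.transpose_nonsing_inv, hBsym.eq]
    set eq : Fin n ⊕ Fin 1 ≃ Fin (n + 1) := finSumFinEquiv with heq
    set A' := A.submatrix eq eq with hA'def
    set c : Matrix (Fin n) (Fin 1) ℝ := fun i _ => A i.castSucc (Fin.last n) with hcdef
    set dd : Matrix (Fin 1) (Fin 1) ℝ := fun _ _ => A (Fin.last n) (Fin.last n) with hdddef
    have hel : ∀ i : Fin n, eq (Sum.inl i) = Fin.castSucc i := by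
      intro i; apply Fin.ext
      simp [heq, finSumFinEquiv_apply_left, Fin.castAdd, Fin.castSucc, Fin.castLE]
    have her : ∀ j : Fin 1, eq (Sum.inr j) = Fin.last n := by
      intro j; apply Fin.ext
      simp [heq, finSumFinEquiv_apply_right, Fin.natAdd, Fin.last, Fin.ext_iff]
    have hA' : A' = fromBlocks B c cᵀ dd := by
      ext i j
      cases i with
      | inl i => cases j with
        | inl j => simp [hA'def, hBdef, hel]
        | inr j => simp [hA'def, hcdef, hel, her]; rfl
      | inr i => cases j with
        | inl j =>
          simp only [hA'def, Matrix.submatrix_apply, Matrix.fromBlocks_apply₂₁,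
            Matrix.transpose_apply, hcdef, hel, her]
          exact hsym.apply _ _
        | inr j => simp [hA'def, hdddef, her]; rfl
    set α : Matrix (Fin 1) (Fin 1) ℝ := dd - cᵀ * B⁻¹ * c with hαdef
    set P₁ : Matrix (Fin n ⊕ Fin 1) (Fin n ⊕ Fin 1) ℝ :=
      fromBlocks 1 (-(B⁻¹ * c)) 0 1 with hP₁def
    have H1 : P₁ᵀ * A' * P₁ = fromBlocks B 0 0 α := by
      rw [hA', hP₁def, hαdef]
      rw [Matrix.fromBlocks_transpose, Matrix.fromBlocks_multiply, Matrix.fromBlocks_multiply,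
        Matrix.fromBlocks_inj]
      refine ⟨by simp, ?_, ?_, ?_⟩
      · simp [Matrix.mul_add, Matrix.mul_neg, ← Matrix.mul_assoc, hBinv1]
      · simp [Matrix.transpose_neg, Matrix.transpose_mul, hBinvT, Matrix.add_mul,
          Matrix.neg_mul, Matrix.mul_assoc, hBinv2]
      · simp [Matrix.transpose_neg, Matrix.transpose_mul, hBinvT, Matrix.mul_add,
          Matrix.add_mul, Matrix.mul_neg, Matrix.neg_mul, Matrix.mul_assoc, hBinv1, hBinv2]
        abel
    have hαval : α 0 0 = leadingMinor (n+1) A (n+1) / leadingMinor (n+1) A n := by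
      have hdetA' : A'.det = A.det := Matrix.det_submatrix_equiv_self eq A
      have hdetblocks : A'.det = B.det * α.det := by
        rw [hA', hαdef, Matrix.det_fromBlocks₁₁]
        congr 2
        rw [Matrix.invOf_eq_nonsing_inv]
      have hα1 : α.det = α 0 0 := Matrix.det_fin_one α
      have hAdet : A.det = leadingMinor (n+1) A (n+1) := (leadingMinor_self (n+1) A).symm
      have key : A.det = B.det * α 0 0 := by rw [← hdetA', hdetblocks, hα1]
      rw [← hAdet, ← hdetB, key]
      field_simp
    set P₂ : Matrix (Fin n ⊕ Fin 1) (Fin n ⊕ Fin 1) ℝ := fromBlocks Q 0 0 1 with hP₂def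
    have H2 : P₂ᵀ * (fromBlocks B 0 0 α) * P₂
        = fromBlocks (Qᵀ * B * Q) 0 0 α := by
      rw [hP₂def, Matrix.fromBlocks_transpose, Matrix.fromBlocks_multiply,
        Matrix.fromBlocks_multiply]
      simp [Matrix.mul_assoc]
    have hαdiag : α = diagonal (fun _ : Fin 1 => α 0 0) := by
      ext i j
      have hi : i = 0 := Subsingleton.elim _ _
      have hj : j = 0 := Subsingleton.elim _ _
      subst hi; subst hj
      simp
    set P' : Matrix (Fin n ⊕ Fin 1) (Fin n ⊕ Fin 1) ℝ := P₁ * P₂ with hP'def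
    have H3 : P'ᵀ * A' * P' = diagonal (Sum.elim
        (fun i : Fin n => leadingMinor n B (i+1) / leadingMinor n B (i : ℕ))
        (fun _ : Fin 1 => α 0 0)) := by
      rw [hP'def, Matrix.transpose_mul]
      calc P₂ᵀ * P₁ᵀ * A' * (P₁ * P₂)
          = P₂ᵀ * (P₁ᵀ * A' * P₁) * P₂ := by
            simp only [Matrix.mul_assoc]
        _ = fromBlocks (Qᵀ * B * Q) 0 0 α := by rw [H1, H2]
        _ = _ := by
            rw [hQ, ← Matrix.fromBlocks_diagonal]
            conv_lhs => rw [hαdiag]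
    refine ⟨P'.submatrix eq.symm eq.symm, ?_, ?_⟩
    · rw [Matrix.det_submatrix_equiv_self, hP'def, Matrix.det_mul, hP₁def, hP₂def,
        Matrix.det_fromBlocks_zero₂₁, Matrix.det_fromBlocks_zero₂₁]
      simpa using hQu
    · have hAback : (A'.submatrix ⇑eq.symm ⇑eq.symm) = A := by
        rw [hA'def, Matrix.submatrix_submatrix]
        simp
      rw [Matrix.transpose_submatrix]
      conv_lhs => rw [← hAback]
      rw [Matrix.submatrix_mul_equiv, Matrix.submatrix_mul_equiv, H3,
        Matrix.submatrix_diagonal_equiv]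
      have hfun : (Sum.elim
          (fun i : Fin n => leadingMinor n B (i+1) / leadingMinor n B (i : ℕ))
          (fun _ : Fin 1 => α 0 0)) ∘ ⇑eq.symm
          = fun i : Fin (n+1) => leadingMinor (n+1) A ((i : ℕ)+1) / leadingMinor (n+1) A (i : ℕ) := by
        funext i
        rcases hs : eq.symm i with j | j
        · have hij : i = eq (Sum.inl j) := by rw [← hs, Equiv.apply_symm_apply]
          rw [hel] at hij
          subst hij
          have h1 : (j : ℕ) + 1 ≤ n := j.isLt
          have h2 : (j : ℕ) ≤ n := le_of_lt j.isLt
          simp only [Function.comp_apply, hs, Sum.elim_inl]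
          rw [leadingMinor_castSucc n A _ h1, leadingMinor_castSucc n A _ h2]
          simp
        · have hij : i = eq (Sum.inr j) := by rw [← hs, Equiv.apply_symm_apply]
          rw [her] at hij
          subst hij
          simp only [Function.comp_apply, hs, Sum.elim_inr]
          rw [hαval]
          simp [Fin.last]
      rw [hfun]

end NegIndexAux

/-- The negative index of inertia `p'` of a nondegenerate symmetric form with nonvanishing
leading principal minors is `n/2 - (1/2) ∑_{k=1}^n sgn(m_k/m_{k-1})`. -/
theorem negIndex_eq_sign_sum (n p p' : ℕ) (A : Matrix (Fin n) (Fin n) ℝ)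
    (hsym : A.IsSymm)
    (hminors : ∀ k, 1 ≤ k → k ≤ n → leadingMinor n A k ≠ 0)
    (hsig : MatHasSig p p' A) :
    (p' : ℝ) = (n : ℝ) / 2 -
      (1 / 2) * ∑ k ∈ Finset.Icc 1 n,
        Real.sign (leadingMinor n A k / leadingMinor n A (k - 1)) := by
  classical
  open Finset NegIndexAux in
  obtain ⟨hpp', P, hPu, hP⟩ := hsig
  obtain ⟨R, hRu, hR⟩ := NegIndexAux.jacobi n A hsym hminors
  set d : Fin n → ℝ := fun i => leadingMinor n A ((i : ℕ)+1) / leadingMinor n A (i : ℕ) with hddef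
  have hm' : ∀ k, k ≤ n → leadingMinor n A k ≠ 0 := by
    intro k hk
    rcases Nat.eq_zero_or_pos k with h0 | h0
    · subst h0; rw [NegIndexAux.leadingMinor_zero]; exact one_ne_zero
    · exact hminors k h0 hk
  have hd : ∀ i, d i ≠ 0 := fun i =>
    div_ne_zero (hm' _ i.isLt) (hm' _ (le_of_lt i.isLt))
  set f : Fin n → ℝ := fun i => if (i : ℕ) < p then (1:ℝ) else -1 with hfdef
  have hf : ∀ i, f i ≠ 0 := by
    intro i; simp only [hfdef]; split <;> norm_num
  have hsd : sigDiag n p = Matrix.diagonal f := rfl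
  have hcard := NegIndexAux.sylvester_card A d f hd hf R P hRu hPu hR (by rw [hP, hsd])
  have hpn : p ≤ n := by omega
  have hcardp : (Finset.univ.filter (fun i : Fin n => (i : ℕ) < p)).card = p := by
    rcases lt_or_eq_of_le hpn with h | h
    · have : (Finset.univ.filter (fun i : Fin n => (i : ℕ) < p)) = Finset.Iio (⟨p, h⟩ : Fin n) := by
        ext i
        simp [Fin.lt_def]
      rw [this, Fin.card_Iio]
    · subst h
      rw [Finset.filter_true_of_mem (fun i _ => i.isLt), Finset.card_univ, Fintype.card_fin]
  have hcardf : (Finset.univ.filter (fun i : Fin n => f i < 0)).card = p' := by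
    have heq : Finset.univ.filter (fun i : Fin n => f i < 0)
        = Finset.univ.filter (fun i : Fin n => ¬ (i : ℕ) < p) := by
      apply Finset.filter_congr
      intro i _
      simp only [hfdef]
      split <;> simp_all <;> norm_num
    have h0 := Finset.card_filter_add_card_filter_not (s := Finset.univ)
      (p := fun i : Fin n => (i : ℕ) < p)
    rw [heq]
    rw [hcardp] at h0
    simp only [Finset.card_univ, Fintype.card_fin] at h0
    omega
  set q := (Finset.univ.filter (fun i : Fin n => d i < 0)).card with hqdef
  have hqp' : q = p' := hcard.trans hcardf
  have hsum : ∑ k ∈ Finset.Icc 1 n,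
      Real.sign (leadingMinor n A k / leadingMinor n A (k - 1))
      = (n : ℝ) - 2 * q := by
    have h1 : ∑ k ∈ Finset.Icc 1 n,
        Real.sign (leadingMinor n A k / leadingMinor n A (k - 1))
        = ∑ j ∈ Finset.range n,
          Real.sign (leadingMinor n A (1 + j) / leadingMinor n A (1 + j - 1)) := by
      rw [← Finset.Ico_add_one_right_eq_Icc, Finset.sum_Ico_eq_sum_range]
      norm_num
    have h2 : ∀ j : Fin n,
        Real.sign (leadingMinor n A (1 + (j : ℕ)) / leadingMinor n A (1 + (j : ℕ) - 1))
        = Real.sign (d j) := by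
      intro j
      congr 1
      simp only [hddef, Nat.add_sub_cancel_left]
      rw [Nat.add_comm]
    rw [h1, ← Fin.sum_univ_eq_sum_range]
    have h3 : ∀ j : Fin n, Real.sign (d j) = if d j < 0 then (-1 : ℝ) else 1 := by
      intro j
      by_cases hj : d j < 0
      · rw [if_pos hj, Real.sign_of_neg hj]
      · rw [if_neg hj, Real.sign_of_pos (lt_of_le_of_ne (not_lt.mp hj) (Ne.symm (hd j)))]
    calc ∑ j : Fin n, Real.sign (leadingMinor n A (1 + (j:ℕ)) / leadingMinor n A (1 + (j:ℕ) - 1))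
        = ∑ j : Fin n, ((1 : ℝ) - 2 * (if d j < 0 then (1:ℝ) else 0)) := by
          apply Finset.sum_congr rfl
          intro j _
          rw [h2 j, h3 j]
          split <;> ring
      _ = (n : ℝ) - 2 * q := by
          rw [Finset.sum_sub_distrib, ← Finset.mul_sum, Finset.sum_boole, hqdef]
          simp [Finset.card_univ]
  rw [hsum, ← hqp']
  ring
end

section
/- The space Γ of all scalar products of fixed signature (p,p') on a finite-dimensional real vector space is path-connected. -/
open Matrix

namespace SigAux

variable {n : ℕ}

/-- Scale a transvection structure's coefficient by `u` and take its matrix. -/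
noncomputable def scaled (u : ℝ) (s : Matrix.TransvectionStruct (Fin n) ℝ) :
    Matrix (Fin n) (Fin n) ℝ :=
  Matrix.transvection s.i s.j (u * s.c)

lemma continuous_scaledProd (L : List (Matrix.TransvectionStruct (Fin n) ℝ)) :
    Continuous fun t : ℝ => (L.map (scaled (1 - t))).prod := by
  induction L with
  | nil => simpa using continuous_const
  | cons a L IH =>
    simp only [List.map_cons, List.prod_cons]
    refine Continuous.matrix_mul ?_ IH
    have : (fun t : ℝ => scaled (1 - t) a) =
        fun t : ℝ => (1 : Matrix (Fin n) (Fin n) ℝ) +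
          ((1 - t) * a.c) • Matrix.single a.i a.j (1 : ℝ) := by
      funext t
      simp [scaled, Matrix.transvection, Matrix.smul_single]
    rw [this]
    exact continuous_const.add
      (((continuous_const.sub continuous_id).mul continuous_const).smul continuous_const)

lemma det_scaledProd (u : ℝ) (L : List (Matrix.TransvectionStruct (Fin n) ℝ)) :
    ((L.map (scaled u)).prod).det = 1 := by
  induction L with
  | nil => simp
  | cons a L IH =>
    simp only [List.map_cons, List.prod_cons, Matrix.det_mul, IH, mul_one]
    exact Matrix.det_transvection_of_ne _ _ a.hij _

lemma scaled_one (s : Matrix.TransvectionStruct (Fin n) ℝ) :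
    scaled 1 s = s.toMatrix := by
  simp [scaled, Matrix.TransvectionStruct.toMatrix]

lemma scaled_zero (s : Matrix.TransvectionStruct (Fin n) ℝ) :
    scaled 0 s = 1 := by
  simp [scaled, Matrix.transvection_zero]

/-- Conjugates of `sigDiag` by invertible matrices are in the set. -/
lemma conj_mem {p p' : ℕ} (hpp : p + p' = n) (Q : Matrix (Fin n) (Fin n) ℝ)
    (hQ : Q.det ≠ 0) : MatHasSig p p' (Qᵀ * sigDiag n p * Q) := by
  refine ⟨hpp, Q⁻¹, isUnit_iff_ne_zero.2 (by simp [Matrix.det_nonsing_inv, hQ]), ?_⟩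
  have h1 : (Q⁻¹)ᵀ * Qᵀ = 1 := by
    rw [Matrix.transpose_nonsing_inv]
    exact Matrix.nonsing_inv_mul _ (by rw [Matrix.det_transpose]; exact isUnit_iff_ne_zero.2 (by assumption))
  calc (Q⁻¹)ᵀ * (Qᵀ * sigDiag n p * Q) * Q⁻¹
      = ((Q⁻¹)ᵀ * Qᵀ) * sigDiag n p * (Q * Q⁻¹) := by
        simp only [Matrix.mul_assoc]
    _ = sigDiag n p := by
        rw [h1, Matrix.mul_nonsing_inv _ (isUnit_iff_ne_zero.2 hQ), Matrix.one_mul, Matrix.mul_one]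

/-- Key lemma: any congruence transform of `sigDiag` is joined to `sigDiag` within the set. -/
lemma joined_sigDiag {p p' : ℕ} (hpp : p + p' = n)
    (Q : Matrix (Fin n) (Fin n) ℝ) (hQ : Q.det ≠ 0) :
    JoinedIn {A : Matrix (Fin n) (Fin n) ℝ | MatHasSig p p' A}
      (Qᵀ * sigDiag n p * Q) (sigDiag n p) := by
  obtain ⟨L, L', d, hQd⟩ := Matrix.Pivot.exists_list_transvec_mul_diagonal_mul_list_transvec Q
  -- each diagonal entry is nonzero
  have hd : ∀ i, d i ≠ 0 := by
    have hdet : Q.det = (Matrix.diagonal d).det := by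
      rw [hQd]
      simp [Matrix.det_mul]
    rw [hdet, Matrix.det_diagonal] at hQ
    intro i hi
    exact hQ (Finset.prod_eq_zero (Finset.mem_univ i) hi)
  set sgn : Fin n → ℝ := fun i => if 0 < d i then 1 else -1 with hsgn
  set g : ℝ → Fin n → ℝ := fun t i => (1 - t) * d i + t * sgn i with hg
  have hgne : ∀ t : ℝ, t ∈ Set.Icc (0:ℝ) 1 → ∀ i, g t i ≠ 0 := by
    rintro t ⟨ht0, ht1⟩ i
    rcases (hd i).lt_or_gt with h | h
    · have hs : sgn i = -1 := by simp [hsgn, not_lt.2 h.le]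
      have : (1 - t) * d i + t * sgn i < 0 := by
        rw [hs]
        rcases eq_or_lt_of_le ht0 with h0 | h0
        · nlinarith
        · nlinarith [mul_nonpos_of_nonneg_of_nonpos (by linarith : (0:ℝ) ≤ 1 - t) h.le]
      exact ne_of_lt this
    · have hs : sgn i = 1 := by simp [hsgn, h]
      have : 0 < (1 - t) * d i + t * sgn i := by
        rw [hs]
        rcases eq_or_lt_of_le ht0 with h0 | h0
        · nlinarith
        · nlinarith [mul_nonneg (by linarith : (0:ℝ) ≤ 1 - t) h.le]
      exact (ne_of_lt this).symm
  -- the path of invertible matrices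
  set F : ℝ → Matrix (Fin n) (Fin n) ℝ := fun t =>
    (L.map (scaled (1 - t))).prod * Matrix.diagonal (g t) * (L'.map (scaled (1 - t))).prod
    with hF
  have hFcont : Continuous F := by
    refine ((continuous_scaledProd L).matrix_mul ?_).matrix_mul (continuous_scaledProd L')
    refine Continuous.matrix_diagonal ?_
    refine continuous_pi fun i => ?_
    exact ((continuous_const.sub continuous_id).mul continuous_const).add
      (continuous_id.mul continuous_const)
  have hFdet : ∀ t : ℝ, t ∈ Set.Icc (0:ℝ) 1 → (F t).det ≠ 0 := by
    intro t ht
    simp only [hF, Matrix.det_mul, det_scaledProd, Matrix.det_diagonal, one_mul, mul_one]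
    exact Finset.prod_ne_zero_iff.2 fun i _ => hgne t ht i
  have hF0 : F 0 = Q := by
    have h1 : ∀ M : List (Matrix.TransvectionStruct (Fin n) ℝ),
        M.map (scaled (1 - 0)) = M.map Matrix.TransvectionStruct.toMatrix := by
      intro M
      simp only [sub_zero]
      exact List.map_congr_left fun s _ => scaled_one s
    have h2 : g 0 = d := by funext i; simp [hg]
    simp only [hF]
    rw [h1, h1, h2, ← hQd]
  have hF1 : F 1 = Matrix.diagonal sgn := by
    have h1 : ∀ M : List (Matrix.TransvectionStruct (Fin n) ℝ),
        (M.map (scaled (1 - 1))).prod = 1 := by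
      intro M
      have : M.map (scaled (1 - 1)) = M.map fun _ => (1 : Matrix (Fin n) (Fin n) ℝ) := by
        simp only [sub_self]
        exact List.map_congr_left fun s _ => scaled_zero s
      rw [this]
      simp
    have h2 : g 1 = sgn := by funext i; simp [hg]
    simp only [hF]
    rw [h1, h1, h2, Matrix.one_mul, Matrix.mul_one]
  -- endpoint: diagonal sign matrix fixes sigDiag
  have hSend : Matrix.diagonal sgn * sigDiag n p * Matrix.diagonal sgn = sigDiag n p := by
    rw [sigDiag, Matrix.diagonal_mul_diagonal, Matrix.diagonal_mul_diagonal]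
    refine congrArg Matrix.diagonal (funext fun i => ?_)
    by_cases h1 : 0 < d i <;> by_cases h2 : (i : ℕ) < p <;>
      simp [hsgn, h1, h2, Pi.mul_apply] <;> ring
  -- build the path
  refine ⟨⟨⟨fun t => (F t)ᵀ * sigDiag n p * F t, ?_⟩, ?_, ?_⟩, ?_⟩
  · exact ((hFcont.comp continuous_subtype_val).matrix_transpose.matrix_mul
      continuous_const).matrix_mul (hFcont.comp continuous_subtype_val)
  · simp [hF0]
  · simp [hF1, hSend]
  · intro t
    exact conj_mem hpp (F t) (hFdet t t.2)

end SigAux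

/-- The space of scalar products of fixed signature `(p,p')` is path-connected. -/
theorem scalarProducts_isPathConnected (n p p' : ℕ) (hn : 0 < n) (hpp : p + p' = n) :
    IsPathConnected {A : Matrix (Fin n) (Fin n) ℝ | MatHasSig p p' A} := by
  refine ⟨sigDiag n p, ⟨hpp, 1, by simp, by simp⟩, ?_⟩
  rintro A ⟨-, P, hP, hPA⟩
  have hPdet : P.det ≠ 0 := by
    intro h
    rw [h] at hP
    exact (by simpa using hP : IsUnit (0:ℝ)).ne_zero rfl
  have hQdet : (P⁻¹).det ≠ 0 := by simp [Matrix.det_nonsing_inv, hPdet]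
  have hA : A = (P⁻¹)ᵀ * sigDiag n p * P⁻¹ := by
    rw [← hPA]
    have h1 : (P⁻¹)ᵀ * Pᵀ = 1 := by
      rw [Matrix.transpose_nonsing_inv]
      exact Matrix.nonsing_inv_mul _ (by rw [Matrix.det_transpose]; exact isUnit_iff_ne_zero.2 (by assumption))
    calc A = (((P⁻¹)ᵀ * Pᵀ) * A) * (P * P⁻¹) := by
            rw [h1, Matrix.mul_nonsing_inv _ (isUnit_iff_ne_zero.2 hPdet), Matrix.one_mul, Matrix.mul_one]
      _ = (P⁻¹)ᵀ * (Pᵀ * A * P) * P⁻¹ := by simp only [Matrix.mul_assoc]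
  have := SigAux.joined_sigDiag hpp (P⁻¹) hQdet
  rw [← hA] at this
  exact this.symm
end

section
/- The tensor field Q := γ^{ik} γ^{jl} dγ_{ij} ⊗ dγ_{kl} on the space Γ of scalar products of signature (p,p') on an n-dimensional vector space V is independent of the chosen basis of V, is symmetric, and is nondegenerate at every point; i.e., Q is a pseudo-Riemannian metric on Γ. -/
open Matrix

/-- The natural metric `Q = γ^{ik} γ^{jl} dγ_{ij} ⊗ dγ_{kl}` on the space of scalar
products, written invariantly: at the point `A`, applied to tangent vectors (symmetric
matrices) `X, Y`, its value is `tr(A⁻¹ X A⁻¹ Y)`. -/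
noncomputable def Qform {n : ℕ} (A X Y : Matrix (Fin n) (Fin n) ℝ) : ℝ :=
  (A⁻¹ * X * A⁻¹ * Y).trace

lemma trace_sq_eq_zero {n : ℕ} {X : Matrix (Fin n) (Fin n) ℝ}
    (hX : X.IsSymm) (h : (X * X).trace = 0) : X = 0 := by
  have h' : (Xᵀ * X).trace = 0 := by rwa [hX]
  ext i j
  have hsum : ∑ j, ∑ i, X i j * X i j = 0 := by
    simpa [Matrix.trace, Matrix.diag, Matrix.mul_apply] using h'
  have hnn : ∀ j ∈ Finset.univ, (0:ℝ) ≤ ∑ i, X i j * X i j := fun j _ =>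
    Finset.sum_nonneg fun i _ => mul_self_nonneg _
  have := (Finset.sum_eq_zero_iff_of_nonneg hnn).mp hsum j (Finset.mem_univ j)
  have := (Finset.sum_eq_zero_iff_of_nonneg (fun i _ => mul_self_nonneg (X i j))).mp this i
    (Finset.mem_univ i)
  have := mul_self_eq_zero.mp this
  simpa using this

/-- The natural tensor field `Q` is basis independent (its coordinate expression is
unchanged under a change of basis `P`), symmetric, and nondegenerate at every point of `Γ`:
it is a (pseudo-Riemannian) metric on `Γ`. -/
theorem natural_metric_wellDefined_symm_nondeg (n p p' : ℕ)
    (A : Matrix (Fin n) (Fin n) ℝ) (hA : MatHasSig p p' A) :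
    -- independence of the choice of basis
    (∀ P : GL (Fin n) ℝ, ∀ X Y : Matrix (Fin n) (Fin n) ℝ,
      Qform ((↑P : Matrix (Fin n) (Fin n) ℝ)ᵀ * A * (↑P : Matrix (Fin n) (Fin n) ℝ))
        ((↑P : Matrix (Fin n) (Fin n) ℝ)ᵀ * X * (↑P : Matrix (Fin n) (Fin n) ℝ))
        ((↑P : Matrix (Fin n) (Fin n) ℝ)ᵀ * Y * (↑P : Matrix (Fin n) (Fin n) ℝ)) = Qform A X Y) ∧
    -- symmetry
    (∀ X Y : Matrix (Fin n) (Fin n) ℝ, X.IsSymm → Y.IsSymm →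
      Qform A X Y = Qform A Y X) ∧
    -- nondegeneracy on the tangent space (symmetric matrices) at every point
    (∀ X : Matrix (Fin n) (Fin n) ℝ, X.IsSymm →
      (∀ Y : Matrix (Fin n) (Fin n) ℝ, Y.IsSymm → Qform A X Y = 0) → X = 0) := by
  obtain ⟨hpp, P₀, hP₀, hP₀A⟩ := hA
  -- A has unit determinant
  have hD : IsUnit (sigDiag n p).det := by
    rw [sigDiag, Matrix.det_diagonal]
    apply isUnit_iff_ne_zero.mpr
    exact Finset.prod_ne_zero_iff.mpr fun i _ => by split <;> norm_num
  have hAdet : IsUnit A.det := by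
    have hDu := hP₀A ▸ hD
    rw [Matrix.det_mul, Matrix.det_mul, Matrix.det_transpose] at hDu
    exact (IsUnit.mul_iff.mp (IsUnit.mul_iff.mp hDu).1).2
  -- A is symmetric
  have hAsymm : Aᵀ = A := by
    have h1 : P₀ᵀ * Aᵀ * P₀ = P₀ᵀ * A * P₀ := by
      have := congrArg Matrix.transpose hP₀A
      rw [Matrix.transpose_mul, Matrix.transpose_mul, Matrix.transpose_transpose] at this
      have hDs : (sigDiag n p)ᵀ = sigDiag n p := Matrix.diagonal_transpose _
      rw [hDs] at this
      rw [← Matrix.mul_assoc] at this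
      rw [this, hP₀A]
    have hPt : IsUnit P₀ᵀ.det := by rwa [Matrix.det_transpose]
    have h2 := congrArg (fun M => P₀ᵀ⁻¹ * M * P₀⁻¹) h1
    simpa [Matrix.mul_assoc, Matrix.mul_nonsing_inv_cancel_right _ _ hP₀,
      Matrix.nonsing_inv_mul_cancel_left _ _ hPt] using h2
  constructor
  · intro P X Y
    set Q : Matrix (Fin n) (Fin n) ℝ := ↑P with hQ
    have hQdet : IsUnit Q.det := Matrix.isUnit_det_of_right_inverse (Units.mul_inv P)
    have hQt : IsUnit Qᵀ.det := by rwa [Matrix.det_transpose]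
    have hinv : (Qᵀ * A * Q)⁻¹ = Q⁻¹ * A⁻¹ * Qᵀ⁻¹ := by
      rw [Matrix.mul_inv_rev, Matrix.mul_inv_rev, Matrix.mul_assoc]
    rw [Qform, Qform, hinv]
    have e : Q⁻¹ * A⁻¹ * Qᵀ⁻¹ * (Qᵀ * X * Q) * (Q⁻¹ * A⁻¹ * Qᵀ⁻¹) * (Qᵀ * Y * Q)
        = Q⁻¹ * (A⁻¹ * X * A⁻¹ * Y * Q) := by
      simp [Matrix.mul_assoc, Matrix.nonsing_inv_mul_cancel_left _ _ hQt,
        Matrix.mul_nonsing_inv_cancel_left _ _ hQdet]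
    rw [e, Matrix.trace_mul_comm, Matrix.mul_nonsing_inv_cancel_right _ _ hQdet]
  refine ⟨?_, ?_⟩
  · intro X Y hX hY
    have hAi : A⁻¹ᵀ = A⁻¹ := by rw [Matrix.transpose_nonsing_inv, hAsymm]
    calc (A⁻¹ * X * A⁻¹ * Y).trace = ((A⁻¹ * X * A⁻¹ * Y)ᵀ).trace := (Matrix.trace_transpose _).symm
      _ = (Yᵀ * (A⁻¹ᵀ * (Xᵀ * A⁻¹ᵀ))).trace := by
            simp [Matrix.transpose_mul, Matrix.mul_assoc]
      _ = (Y * (A⁻¹ * (X * A⁻¹))).trace := by rw [hAi, hX, hY]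
      _ = ((Y * A⁻¹ * X) * A⁻¹).trace := by rw [Matrix.mul_assoc, Matrix.mul_assoc]
      _ = (A⁻¹ * (Y * A⁻¹ * X)).trace := Matrix.trace_mul_comm _ _
      _ = (A⁻¹ * Y * A⁻¹ * X).trace := by simp [Matrix.mul_assoc]
  · intro X hX h
    have hY : (A * X * A).IsSymm := by
      rw [Matrix.IsSymm, Matrix.transpose_mul, Matrix.transpose_mul, hAsymm, hX,
        Matrix.mul_assoc]
    have := h (A * X * A) hY
    rw [Qform] at this
    have e : A⁻¹ * X * A⁻¹ * (A * X * A) = A⁻¹ * (X * X * A) := by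
      simp [Matrix.mul_assoc, Matrix.nonsing_inv_mul_cancel_left _ _ hAdet]
    rw [e, Matrix.trace_mul_comm, Matrix.mul_nonsing_inv_cancel_right _ _ hAdet] at this
    exact trace_sq_eq_zero hX this
end

section
/- The natural metric Q on the space Γ of scalar products of signature (p,p') on an n-dimensional vector space has signature ( (p(p+1)+p'(p'+1))/2 , p p' ); in particular Q is Riemannian (positive definite) if and only if p' = 0 or p = 0. -/
open Matrix

/-- The space of symmetric `n × n` real matrices: the tangent space to `Γ` at any point. -/
def symMat (n : ℕ) : Submodule ℝ (Matrix (Fin n) (Fin n) ℝ) where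
  carrier := {X | Xᵀ = X}
  add_mem' := by
    intro a b ha hb
    simp only [Set.mem_setOf_eq, Matrix.transpose_add] at *
    rw [ha, hb]
  zero_mem' := by simp only [Set.mem_setOf_eq, Matrix.transpose_zero]
  smul_mem' := by
    intro c x hx
    simp only [Set.mem_setOf_eq, Matrix.transpose_smul] at *
    rw [hx]

-- ============ aux development ============

abbrev pairIdx (n : ℕ) := {q : Fin n × Fin n // q.1 ≤ q.2}

noncomputable def symCoordEquiv (n : ℕ) : symMat n ≃ₗ[ℝ] (pairIdx n → ℝ) where
  toFun X q := X.1 q.1.1 q.1.2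
  map_add' X Y := rfl
  map_smul' c X := rfl
  invFun c := ⟨Matrix.of fun i j =>
      if h : i ≤ j then c ⟨(i, j), h⟩ else c ⟨(j, i), le_of_not_ge h⟩, by
    ext i j
    simp only [Matrix.transpose_apply, Matrix.of_apply]
    rcases le_or_gt i j with h | h
    · rcases le_or_gt j i with h' | h'
      · have : i = j := le_antisymm h h'
        subst this; rfl
      · rw [dif_neg (not_le.mpr h'), dif_pos h]
    · rw [dif_pos h.le, dif_neg (not_le.mpr h)]⟩
  left_inv X := by
    apply Subtype.ext
    ext i j
    simp only [Matrix.of_apply]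
    split_ifs with h
    · rfl
    · conv_rhs => rw [← X.2]
      rfl
  right_inv c := by
    funext q
    obtain ⟨⟨i, j⟩, h⟩ := q
    simp only [Matrix.of_apply]
    rw [dif_pos h]

noncomputable def symBasis (n : ℕ) : Module.Basis (pairIdx n) ℝ (symMat n) :=
  Module.Basis.ofEquivFun (symCoordEquiv n)

lemma symBasis_entry {n : ℕ} (q : pairIdx n) (i j : Fin n) :
    ((symBasis n q : Matrix (Fin n) (Fin n) ℝ)) i j =
      if (i = q.1.1 ∧ j = q.1.2) ∨ (i = q.1.2 ∧ j = q.1.1) then 1 else 0 := by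
  obtain ⟨⟨a, b⟩, hab⟩ := q
  set c : pairIdx n → ℝ := Pi.single (⟨(a,b),hab⟩ : pairIdx n) (1:ℝ) with hc
  have : (symBasis n ⟨(a,b), hab⟩ : Matrix (Fin n) (Fin n) ℝ) i j
      = if h : i ≤ j then c ⟨(i,j), h⟩
        else c ⟨(j,i), le_of_not_ge h⟩ := by
    rw [symBasis, Module.Basis.coe_ofEquivFun]
    rfl
  rw [this]
  rcases le_or_gt i j with hle | hlt
  · rw [dif_pos hle, hc]
    simp only [Pi.single_apply, Subtype.mk.injEq, Prod.mk.injEq]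
    refine if_congr ?_ rfl rfl
    constructor
    · tauto
    · rintro (⟨h1, h2⟩ | ⟨h1, h2⟩)
      · exact ⟨h1, h2⟩
      · subst h1; subst h2
        have hab' : i = j := le_antisymm hle hab
        exact ⟨hab' ▸ rfl, hab' ▸ rfl⟩
  · rw [dif_neg (not_le.mpr hlt), hc]
    simp only [Pi.single_apply, Subtype.mk.injEq, Prod.mk.injEq]
    refine if_congr ?_ rfl rfl
    constructor
    · rintro ⟨h1, h2⟩
      exact Or.inr ⟨h2, h1⟩
    · rintro (⟨h1, h2⟩ | ⟨h1, h2⟩)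
      · subst h1; subst h2
        exact absurd hab (not_le.mpr hlt)
      · exact ⟨h2, h1⟩

-- sign function
noncomputable def sgn (p : ℕ) {n : ℕ} (i : Fin n) : ℝ := if (i : ℕ) < p then 1 else -1

lemma sgn_mul_self (p : ℕ) {n : ℕ} (i : Fin n) : sgn p i * sgn p i = 1 := by
  unfold sgn; split_ifs <;> norm_num

lemma sigDiag_mul_self (n p : ℕ) : sigDiag n p * sigDiag n p = 1 := by
  rw [sigDiag, Matrix.diagonal_mul_diagonal]
  have : (fun i : Fin n => (if (i : ℕ) < p then (1:ℝ) else -1) * (if (i : ℕ) < p then (1:ℝ) else -1)) = fun _ => 1 := by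
    funext i; split_ifs <;> norm_num
  rw [this, Matrix.diagonal_one]

lemma sigDiag_inv (n p : ℕ) : (sigDiag n p)⁻¹ = sigDiag n p :=
  Matrix.inv_eq_right_inv (sigDiag_mul_self n p)

lemma isUnit_sigDiag_det (n p : ℕ) : IsUnit (sigDiag n p).det :=
  Matrix.isUnit_det_of_right_inverse (sigDiag_mul_self n p)

lemma Qform_sigDiag (n p : ℕ) (X Y : Matrix (Fin n) (Fin n) ℝ) :
    Qform (sigDiag n p) X Y = ∑ i : Fin n, ∑ j : Fin n, sgn p i * (sgn p j * (X i j * Y j i)) := by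
  rw [Qform, sigDiag_inv]
  have h3 : sigDiag n p * X * sigDiag n p = Matrix.of (fun i j => sgn p i * X i j * sgn p j) := by
    ext i j
    rw [sigDiag, Matrix.mul_diagonal, Matrix.diagonal_mul]
    rfl
  rw [h3, Matrix.trace]
  simp only [Matrix.diag_apply, Matrix.mul_apply, Matrix.of_apply]
  apply Finset.sum_congr rfl; intro i _
  apply Finset.sum_congr rfl; intro j _
  ring

lemma Qform_smul_smul {n : ℕ} (A X Y : Matrix (Fin n) (Fin n) ℝ) (c d : ℝ) :
    Qform A (c • X) (d • Y) = c * (d * Qform A X Y) := by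
  simp [Qform, Matrix.mul_smul, Matrix.smul_mul, Matrix.trace_smul, smul_eq_mul]
  ring

lemma sum_indicator_single {n : ℕ} (a c : Fin n) (g : Fin n → Fin n → ℝ) :
    (∑ i : Fin n, ∑ j : Fin n, if i = a ∧ j = c then g i j else 0) = g a c := by
  simp [ite_and, Finset.sum_ite_eq']

lemma sum_indicator_pair {n : ℕ} (a b : Fin n) (hab : a ≠ b) (g : Fin n → Fin n → ℝ) :
    (∑ i : Fin n, ∑ j : Fin n, if (i = a ∧ j = b) ∨ (i = b ∧ j = a) then g i j else 0)
      = g a b + g b a := by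
  have key : ∀ i j : Fin n, (if (i = a ∧ j = b) ∨ (i = b ∧ j = a) then g i j else 0)
      = (if i = a ∧ j = b then g i j else 0) + (if i = b ∧ j = a then g i j else 0) := by
    intro i j
    by_cases h1 : i = a ∧ j = b <;> by_cases h2 : i = b ∧ j = a
    · exact absurd (h1.1 ▸ h2.1) hab
    · rw [if_pos (Or.inl h1), if_pos h1, if_neg h2, add_zero]
    · rw [if_pos (Or.inr h2), if_neg h1, if_pos h2, zero_add]
    · rw [if_neg (by tauto), if_neg h1, if_neg h2, add_zero]
  simp_rw [key, Finset.sum_add_distrib]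
  rw [sum_indicator_single, sum_indicator_single]

noncomputable def wU {n : ℕ} (q : pairIdx n) : ℝˣ :=
  if q.1.1 = q.1.2 then 1 else Units.mk0 ((Real.sqrt 2)⁻¹) (by positivity)

lemma indicator_mul {P Q : Prop} [Decidable P] [Decidable Q] :
    (if P then (1:ℝ) else 0) * (if Q then (1:ℝ) else 0) = if P ∧ Q then 1 else 0 := by
  split_ifs <;> simp_all

lemma Qform_symBasis (n p : ℕ) (q r : pairIdx n) :
    Qform (sigDiag n p) ((wU q : ℝ) • (symBasis n q : Matrix (Fin n) (Fin n) ℝ))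
        ((wU r : ℝ) • (symBasis n r : Matrix (Fin n) (Fin n) ℝ))
      = if q = r then sgn p q.1.1 * sgn p q.1.2 else 0 := by
  rw [Qform_smul_smul, Qform_sigDiag]
  simp only [symBasis_entry, indicator_mul]
  by_cases hqr : q = r
  · subst hqr
    obtain ⟨⟨a, b⟩, hab⟩ := q
    simp only [if_pos rfl]
    rcases eq_or_lt_of_le hab with heq | hlt
    · -- diagonal case a = b
      cases heq
      have h1 : ∀ i j : Fin n,
          (((i = a ∧ j = a) ∨ (i = a ∧ j = a)) ∧ ((j = a ∧ i = a) ∨ (j = a ∧ i = a)))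
            ↔ (i = a ∧ j = a) := by tauto
      simp only [mul_ite, mul_one, mul_zero]
      simp_rw [if_congr (h1 _ _) rfl rfl]
      rw [show (wU (⟨(a,a), hab⟩ : pairIdx n) : ℝ) = 1 from by simp [wU]]
      rw [sum_indicator_single]
      simp
    · -- off-diagonal case a < b
      have hne : a ≠ b := ne_of_lt hlt
      have h1 : ∀ i j : Fin n,
          (((i = a ∧ j = b) ∨ (i = b ∧ j = a)) ∧ ((j = a ∧ i = b) ∨ (j = b ∧ i = a)))
            ↔ ((i = a ∧ j = b) ∨ (i = b ∧ j = a)) := by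
        intro i j
        constructor
        · tauto
        · rintro (⟨h2, h3⟩ | ⟨h2, h3⟩) <;> subst h2 <;> subst h3 <;> tauto
      simp only [mul_ite, mul_one, mul_zero]
      simp_rw [if_congr (h1 _ _) rfl rfl]
      rw [sum_indicator_pair a b hne]
      have hw : (wU ⟨(a,b), hab⟩ : ℝ) = (Real.sqrt 2)⁻¹ := by
        simp [wU, hne]
      rw [hw, if_pos trivial]
      have h2 : ((Real.sqrt 2)⁻¹ : ℝ) * (Real.sqrt 2)⁻¹ = 2⁻¹ := by
        rw [← mul_inv]
        rw [Real.mul_self_sqrt (by norm_num)]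
      have h3 : sgn p a * sgn p b + sgn p b * sgn p a = 2 * (sgn p a * sgn p b) := by
        ring
      rw [h3, ← mul_assoc, h2]
      ring
  · rw [if_neg hqr]
    obtain ⟨⟨a, b⟩, hab⟩ := q
    obtain ⟨⟨c, d⟩, hcd⟩ := r
    apply mul_eq_zero_of_right
    apply mul_eq_zero_of_right
    apply Finset.sum_eq_zero; intro i _
    apply Finset.sum_eq_zero; intro j _
    apply mul_eq_zero_of_right
    apply mul_eq_zero_of_right
    rw [if_neg]
    intro h
    apply hqr
    apply Subtype.ext
    simp only at h hab hcd ⊢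
    obtain ⟨h1, h2⟩ := h
    have hab' : a ≤ b := hab
    have hcd' : c ≤ d := hcd
    have key : a = c ∧ b = d := by
      rcases h1 with ⟨hi, hj⟩ | ⟨hi, hj⟩ <;> rcases h2 with ⟨hc, hd⟩ | ⟨hc, hd⟩ <;> subst_vars <;>
        refine ⟨?_, ?_⟩ <;>
        first
          | rfl
          | exact le_antisymm hab' hcd'
          | exact le_antisymm hcd' hab'
    exact Prod.ext key.1 key.2

noncomputable def congrLE {n : ℕ} (C : Matrix (Fin n) (Fin n) ℝ) (hC : IsUnit C.det) :
    symMat n ≃ₗ[ℝ] symMat n where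
  toFun X := ⟨Cᵀ * X.1 * C, by
    show (Cᵀ * X.1 * C)ᵀ = _
    rw [Matrix.transpose_mul, Matrix.transpose_mul, Matrix.transpose_transpose, X.2,
      Matrix.mul_assoc]⟩
  map_add' X Y := by
    apply Subtype.ext
    show Cᵀ * (X.1 + Y.1) * C = _
    rw [Matrix.mul_add, Matrix.add_mul]
    rfl
  map_smul' c X := by
    apply Subtype.ext
    show Cᵀ * (c • X.1) * C = _
    rw [Matrix.mul_smul, Matrix.smul_mul]
    rfl
  invFun Y := ⟨(C⁻¹)ᵀ * Y.1 * C⁻¹, by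
    show ((C⁻¹)ᵀ * Y.1 * C⁻¹)ᵀ = _
    rw [Matrix.transpose_mul, Matrix.transpose_mul, Matrix.transpose_transpose, Y.2,
      Matrix.mul_assoc]⟩
  left_inv X := by
    apply Subtype.ext
    show (C⁻¹)ᵀ * (Cᵀ * X.1 * C) * C⁻¹ = X.1
    have h1 : (C⁻¹)ᵀ * Cᵀ = 1 := by
      rw [← Matrix.transpose_mul, Matrix.mul_nonsing_inv C hC, Matrix.transpose_one]
    have h2 : C * C⁻¹ = 1 := Matrix.mul_nonsing_inv C hC
    calc (C⁻¹)ᵀ * (Cᵀ * X.1 * C) * C⁻¹ = ((C⁻¹)ᵀ * Cᵀ) * X.1 * (C * C⁻¹) := by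
          simp only [Matrix.mul_assoc]
      _ = X.1 := by rw [h1, h2, Matrix.one_mul, Matrix.mul_one]
  right_inv Y := by
    apply Subtype.ext
    show Cᵀ * ((C⁻¹)ᵀ * Y.1 * C⁻¹) * C = Y.1
    have h1 : Cᵀ * (C⁻¹)ᵀ = 1 := by
      rw [← Matrix.transpose_mul, Matrix.nonsing_inv_mul C hC, Matrix.transpose_one]
    have h2 : C⁻¹ * C = 1 := Matrix.nonsing_inv_mul C hC
    calc Cᵀ * ((C⁻¹)ᵀ * Y.1 * C⁻¹) * C = (Cᵀ * (C⁻¹)ᵀ) * Y.1 * (C⁻¹ * C) := by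
          simp only [Matrix.mul_assoc]
      _ = Y.1 := by rw [h1, h2, Matrix.one_mul, Matrix.mul_one]

lemma Qform_congr {n p : ℕ} (A P : Matrix (Fin n) (Fin n) ℝ) (hP : IsUnit P.det)
    (hAP : Pᵀ * A * P = sigDiag n p) (X Y : Matrix (Fin n) (Fin n) ℝ) :
    Qform A ((P⁻¹)ᵀ * X * P⁻¹) ((P⁻¹)ᵀ * Y * P⁻¹) = Qform (sigDiag n p) X Y := by
  have hPT : IsUnit Pᵀ.det := by rwa [Matrix.det_transpose]
  set J := sigDiag n p with hJ
  have hA : A = Pᵀ⁻¹ * J * P⁻¹ := by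
    rw [← hAP]
    simp only [Matrix.mul_assoc]
    rw [Matrix.mul_nonsing_inv P hP, Matrix.mul_one, ← Matrix.mul_assoc,
      Matrix.nonsing_inv_mul _ hPT, Matrix.one_mul]
  have hAinv : A⁻¹ = P * J * Pᵀ := by
    rw [hA, Matrix.mul_inv_rev, Matrix.mul_inv_rev, hJ, sigDiag_inv,
      Matrix.nonsing_inv_nonsing_inv P hP, Matrix.nonsing_inv_nonsing_inv Pᵀ hPT,
      ← Matrix.mul_assoc]
  have cancel1 : ∀ Z : Matrix (Fin n) (Fin n) ℝ, Pᵀ * ((P⁻¹)ᵀ * Z) = Z := by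
    intro Z
    rw [← Matrix.mul_assoc, ← Matrix.transpose_mul, Matrix.nonsing_inv_mul P hP,
      Matrix.transpose_one, Matrix.one_mul]
  have cancel2 : ∀ Z : Matrix (Fin n) (Fin n) ℝ, P⁻¹ * (P * Z) = Z := by
    intro Z
    rw [← Matrix.mul_assoc, Matrix.nonsing_inv_mul P hP, Matrix.one_mul]
  have hmain : A⁻¹ * ((P⁻¹)ᵀ * X * P⁻¹) * A⁻¹ * ((P⁻¹)ᵀ * Y * P⁻¹)
      = (P * (J * X * J * Y)) * P⁻¹ := by
    rw [hAinv]
    simp only [Matrix.mul_assoc]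
    rw [cancel1, cancel2, cancel1]
  rw [Qform, hmain, Matrix.trace_mul_cycle, Matrix.nonsing_inv_mul P hP, Matrix.one_mul]
  rw [Qform, hJ, sigDiag_inv]

lemma tri_count (m : ℕ) :
    (∑ i ∈ Finset.range m, ∑ j ∈ Finset.range m, if i ≤ j then 1 else 0) * 2 = m * (m + 1) := by
  have h1 : ∀ i, (∑ j ∈ Finset.range m, if i ≤ j then 1 else 0) = m - i := by
    intro i
    rw [← Finset.sum_filter]
    have : (Finset.range m).filter (fun j => i ≤ j) = Finset.Ico i m := by
      ext j
      simp only [Finset.mem_filter, Finset.mem_range, Finset.mem_Ico]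
      tauto
    rw [this, Finset.sum_const, Nat.card_Ico, smul_eq_mul, mul_one]
  rw [Finset.sum_congr rfl (fun i _ => h1 i)]
  rw [← Finset.sum_range_reflect]
  have h2 : ∀ j ∈ Finset.range m, m - (m - 1 - j) = j + 1 := by
    intro j hj
    rw [Finset.mem_range] at hj
    omega
  rw [Finset.sum_congr rfl h2, Finset.sum_add_distrib, Finset.sum_const, Finset.card_range,
    smul_eq_mul, mul_one, add_mul, Finset.sum_range_id_mul_two]
  cases m with
  | zero => rfl
  | succ k =>
    simp only [Nat.add_sub_cancel]
    ring

lemma count_pos_nat (p p' : ℕ) :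
    (∑ i ∈ Finset.range (p + p'), ∑ j ∈ Finset.range (p + p'),
        if (i ≤ j ∧ (i < p ↔ j < p)) then 1 else 0) * 2 = p * (p + 1) + p' * (p' + 1) := by
  simp only [Finset.sum_range_add, Finset.sum_add_distrib]
  have e11 : (∑ i ∈ Finset.range p, ∑ j ∈ Finset.range p,
      if (i ≤ j ∧ (i < p ↔ j < p)) then 1 else 0)
      = ∑ i ∈ Finset.range p, ∑ j ∈ Finset.range p, if i ≤ j then 1 else 0 := by
    apply Finset.sum_congr rfl; intro i hi
    apply Finset.sum_congr rfl; intro j hj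
    rw [Finset.mem_range] at hi hj
    exact if_congr (by omega) rfl rfl
  have e12 : (∑ i ∈ Finset.range p, ∑ j ∈ Finset.range p',
      if (i ≤ p + j ∧ (i < p ↔ p + j < p)) then 1 else 0) = 0 := by
    apply Finset.sum_eq_zero; intro i hi
    apply Finset.sum_eq_zero; intro j hj
    rw [Finset.mem_range] at hi hj
    rw [if_neg (by omega)]
  have e21 : (∑ i ∈ Finset.range p', ∑ j ∈ Finset.range p,
      if (p + i ≤ j ∧ (p + i < p ↔ j < p)) then 1 else 0) = 0 := by
    apply Finset.sum_eq_zero; intro i hi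
    apply Finset.sum_eq_zero; intro j hj
    rw [Finset.mem_range] at hi hj
    rw [if_neg (by omega)]
  have e22 : (∑ i ∈ Finset.range p', ∑ j ∈ Finset.range p',
      if (p + i ≤ p + j ∧ (p + i < p ↔ p + j < p)) then 1 else 0)
      = ∑ i ∈ Finset.range p', ∑ j ∈ Finset.range p', if i ≤ j then 1 else 0 := by
    apply Finset.sum_congr rfl; intro i hi
    apply Finset.sum_congr rfl; intro j hj
    rw [Finset.mem_range] at hi hj
    exact if_congr (by omega) rfl rfl
  rw [e11, e12, e21, e22, add_zero, zero_add, add_mul, tri_count, tri_count]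

lemma count_neg_nat (p p' : ℕ) :
    (∑ i ∈ Finset.range (p + p'), ∑ j ∈ Finset.range (p + p'),
        if (i ≤ j ∧ ¬(i < p ↔ j < p)) then 1 else 0) = p * p' := by
  simp only [Finset.sum_range_add, Finset.sum_add_distrib]
  have e11 : (∑ i ∈ Finset.range p, ∑ j ∈ Finset.range p,
      if (i ≤ j ∧ ¬(i < p ↔ j < p)) then 1 else 0) = 0 := by
    apply Finset.sum_eq_zero; intro i hi
    apply Finset.sum_eq_zero; intro j hj
    rw [Finset.mem_range] at hi hj
    rw [if_neg (by omega)]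
  have e12 : (∑ i ∈ Finset.range p, ∑ j ∈ Finset.range p',
      if (i ≤ p + j ∧ ¬(i < p ↔ p + j < p)) then 1 else 0) = p * p' := by
    have : ∀ i ∈ Finset.range p, (∑ j ∈ Finset.range p',
        if (i ≤ p + j ∧ ¬(i < p ↔ p + j < p)) then 1 else 0) = p' := by
      intro i hi
      rw [Finset.mem_range] at hi
      have : ∀ j ∈ Finset.range p', (if (i ≤ p + j ∧ ¬(i < p ↔ p + j < p)) then 1 else 0) = 1 := by
        intro j hj
        rw [if_pos (by omega)]
      rw [Finset.sum_congr rfl this, Finset.sum_const, Finset.card_range, smul_eq_mul, mul_one]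
    rw [Finset.sum_congr rfl this, Finset.sum_const, Finset.card_range, smul_eq_mul]
  have e21 : (∑ i ∈ Finset.range p', ∑ j ∈ Finset.range p,
      if (p + i ≤ j ∧ ¬(p + i < p ↔ j < p)) then 1 else 0) = 0 := by
    apply Finset.sum_eq_zero; intro i hi
    apply Finset.sum_eq_zero; intro j hj
    rw [Finset.mem_range] at hi hj
    rw [if_neg (by omega)]
  have e22 : (∑ i ∈ Finset.range p', ∑ j ∈ Finset.range p',
      if (p + i ≤ p + j ∧ ¬(p + i < p ↔ p + j < p)) then 1 else 0) = 0 := by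
    apply Finset.sum_eq_zero; intro i hi
    apply Finset.sum_eq_zero; intro j hj
    rw [Finset.mem_range] at hi hj
    rw [if_neg (by omega)]
  rw [e11, e12, e21, e22, add_zero, zero_add, add_zero]

lemma card_pair_filter (n : ℕ) (C : ℕ → ℕ → Prop) [∀ a b, Decidable (C a b)] :
    Fintype.card {x : Fin n × Fin n // x.1 ≤ x.2 ∧ C x.1 x.2}
      = ∑ i ∈ Finset.range n, ∑ j ∈ Finset.range n, if (i ≤ j ∧ C i j) then 1 else 0 := by
  rw [Fintype.card_subtype, Finset.card_filter, Fintype.sum_prod_type]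
  rw [← Fin.sum_univ_eq_sum_range
    (fun i => ∑ j ∈ Finset.range n, if (i ≤ j ∧ C i j) then 1 else 0) n]
  apply Finset.sum_congr rfl; intro i _
  rw [← Fin.sum_univ_eq_sum_range (fun j => if ((i : ℕ) ≤ j ∧ C i j) then 1 else 0) n]
  apply Finset.sum_congr rfl; intro j _
  exact if_congr (and_congr Fin.le_def Iff.rfl) rfl rfl

def posPred (p : ℕ) {n : ℕ} (q : pairIdx n) : Prop :=
  ((q.1.1 : ℕ) < p ↔ (q.1.2 : ℕ) < p)

instance (p n : ℕ) : DecidablePred (posPred p (n := n)) := fun q =>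
  inferInstanceAs (Decidable (_ ↔ _))

lemma sgn_mul_sgn (p : ℕ) {n : ℕ} (q : pairIdx n) :
    sgn p q.1.1 * sgn p q.1.2 = if posPred p q then (1 : ℝ) else -1 := by
  unfold sgn posPred
  by_cases h1 : (q.1.1 : ℕ) < p <;> by_cases h2 : (q.1.2 : ℕ) < p <;>
    simp [h1, h2] <;> norm_num [h1, h2] <;> tauto

lemma card_posPred (p p' : ℕ) :
    Fintype.card {q : pairIdx (p + p') // posPred p q}
      = (p * (p + 1) + p' * (p' + 1)) / 2 := by
  have h : Fintype.card {q : pairIdx (p + p') // posPred p q} * 2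
      = p * (p + 1) + p' * (p' + 1) := by
    have e : {q : pairIdx (p + p') // posPred p q}
        ≃ {x : Fin (p + p') × Fin (p + p') // x.1 ≤ x.2 ∧ ((x.1 : ℕ) < p ↔ (x.2 : ℕ) < p)} :=
      Equiv.subtypeSubtypeEquivSubtypeInter (fun x : Fin (p + p') × Fin (p + p') => x.1 ≤ x.2)
        (fun x => (x.1 : ℕ) < p ↔ (x.2 : ℕ) < p)
    rw [Fintype.card_congr e, card_pair_filter (p + p') (fun a b => (a < p ↔ b < p))]
    exact count_pos_nat p p'
  obtain ⟨K, hK⟩ : ∃ K, p * (p + 1) + p' * (p' + 1) = K := ⟨_, rfl⟩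
  rw [hK] at h ⊢
  omega

lemma card_negPred (p p' : ℕ) :
    Fintype.card {q : pairIdx (p + p') // ¬ posPred p q} = p * p' := by
  have e : {q : pairIdx (p + p') // ¬ posPred p q}
      ≃ {x : Fin (p + p') × Fin (p + p') // x.1 ≤ x.2 ∧ ¬((x.1 : ℕ) < p ↔ (x.2 : ℕ) < p)} :=
    Equiv.subtypeSubtypeEquivSubtypeInter (fun x : Fin (p + p') × Fin (p + p') => x.1 ≤ x.2)
      (fun x => ¬((x.1 : ℕ) < p ↔ (x.2 : ℕ) < p))
  rw [Fintype.card_congr e, card_pair_filter (p + p') (fun a b => ¬(a < p ↔ b < p))]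
  exact count_neg_nat p p'

noncomputable def idxEquiv (p p' : ℕ) :
    Fin ((p * (p + 1) + p' * (p' + 1)) / 2 + p * p') ≃ pairIdx (p + p') :=
  finSumFinEquiv.symm.trans
    ((Equiv.sumCongr (Fintype.equivFinOfCardEq (card_posPred p p')).symm
        (Fintype.equivFinOfCardEq (card_negPred p p')).symm).trans
      (Equiv.sumCompl (posPred p)))

lemma idxEquiv_pos_iff (p p' : ℕ) (I : Fin ((p * (p + 1) + p' * (p' + 1)) / 2 + p * p')) :
    posPred p (idxEquiv p p' I) ↔ (I : ℕ) < (p * (p + 1) + p' * (p' + 1)) / 2 := by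
  rcases hs : finSumFinEquiv.symm I with a | b
  · have hI : I = finSumFinEquiv (Sum.inl a) := by
      rw [← hs, Equiv.apply_symm_apply]
    have hval : (I : ℕ) = (a : ℕ) := by rw [hI]; rfl
    have he : idxEquiv p p' I
        = ((Fintype.equivFinOfCardEq (card_posPred p p')).symm a : pairIdx (p + p')) := by
      simp [idxEquiv, hs]
    rw [he, hval]
    exact ⟨fun _ => a.isLt, fun _ => ((Fintype.equivFinOfCardEq (card_posPred p p')).symm a).2⟩
  · have hI : I = finSumFinEquiv (Sum.inr b) := by
      rw [← hs, Equiv.apply_symm_apply]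
    have hval : (I : ℕ) = (p * (p + 1) + p' * (p' + 1)) / 2 + (b : ℕ) := by rw [hI]; rfl
    have he : idxEquiv p p' I
        = ((Fintype.equivFinOfCardEq (card_negPred p p')).symm b : pairIdx (p + p')) := by
      simp [idxEquiv, hs]
    rw [he, hval]
    constructor
    · intro h
      exact absurd h ((Fintype.equivFinOfCardEq (card_negPred p p')).symm b).2
    · intro h
      omega

lemma Qform_sum_left {n : ℕ} (A : Matrix (Fin n) (Fin n) ℝ) {κ : Type*} (s : Finset κ)
    (f : κ → Matrix (Fin n) (Fin n) ℝ) (Y : Matrix (Fin n) (Fin n) ℝ) :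
    Qform A (∑ i ∈ s, f i) Y = ∑ i ∈ s, Qform A (f i) Y := by
  simp [Qform, Matrix.mul_sum, Matrix.sum_mul, Matrix.trace_sum]

lemma Qform_sum_right {n : ℕ} (A : Matrix (Fin n) (Fin n) ℝ) {κ : Type*} (s : Finset κ)
    (X : Matrix (Fin n) (Fin n) ℝ) (f : κ → Matrix (Fin n) (Fin n) ℝ) :
    Qform A X (∑ i ∈ s, f i) = ∑ i ∈ s, Qform A X (f i) := by
  simp [Qform, Matrix.mul_sum, Matrix.sum_mul, Matrix.trace_sum]

lemma Qform_smul_left {n : ℕ} (A X Y : Matrix (Fin n) (Fin n) ℝ) (c : ℝ) :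
    Qform A (c • X) Y = c * Qform A X Y := by
  simp [Qform, Matrix.mul_smul, Matrix.smul_mul, Matrix.trace_smul, smul_eq_mul]

lemma Qform_smul_right {n : ℕ} (A X Y : Matrix (Fin n) (Fin n) ℝ) (c : ℝ) :
    Qform A X (c • Y) = c * Qform A X Y := by
  simp [Qform, Matrix.mul_smul, Matrix.smul_mul, Matrix.trace_smul, smul_eq_mul]


/-- The natural metric `Q` has signature `((p(p+1)+p'(p'+1))/2, p p')` at every point of
`Γ`; in particular it is Riemannian (positive definite) iff `p' = 0` or `p = 0`. -/
theorem natural_metric_signature (p p' : ℕ)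
    (A : Matrix (Fin (p + p')) (Fin (p + p')) ℝ) (hA : MatHasSig p p' A) :
    (∃ b : Module.Basis (Fin ((p * (p + 1) + p' * (p' + 1)) / 2 + p * p')) ℝ (symMat (p + p')),
      ∀ I J, Qform A (↑(b I)) (↑(b J)) =
        if I = J then
          (if (I : ℕ) < (p * (p + 1) + p' * (p' + 1)) / 2 then (1 : ℝ) else -1)
        else 0) ∧
    ((∀ X : Matrix (Fin (p + p')) (Fin (p + p')) ℝ, X.IsSymm → X ≠ 0 → 0 < Qform A X X)
      ↔ (p' = 0 ∨ p = 0)) := by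
  obtain ⟨-, P, hP, hAP⟩ := hA
  have hPinv : IsUnit (P⁻¹).det := Matrix.isUnit_nonsing_inv_det P hP
  set bF : Module.Basis (Fin ((p * (p + 1) + p' * (p' + 1)) / 2 + p * p')) ℝ (symMat (p + p')) :=
    (((symBasis (p + p')).unitsSMul wU).map (congrLE P⁻¹ hPinv)).reindex (idxEquiv p p').symm
    with hbF
  have hcoe : ∀ I, (bF I : Matrix (Fin (p + p')) (Fin (p + p')) ℝ)
      = (P⁻¹)ᵀ * ((wU (idxEquiv p p' I) : ℝ) • (symBasis (p + p') (idxEquiv p p' I) :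
          Matrix (Fin (p + p')) (Fin (p + p')) ℝ)) * P⁻¹ := by
    intro I
    rw [hbF, Module.Basis.reindex_apply, Equiv.symm_symm, Module.Basis.map_apply, Module.Basis.unitsSMul_apply]
    rfl
  have hb : ∀ I J, Qform A (↑(bF I)) (↑(bF J)) =
      if I = J then
        (if (I : ℕ) < (p * (p + 1) + p' * (p' + 1)) / 2 then (1 : ℝ) else -1)
      else 0 := by
    intro I J
    rw [hcoe I, hcoe J, Qform_congr A P hP hAP, Qform_symBasis]
    by_cases hIJ : I = J
    · subst hIJ
      rw [if_pos rfl, if_pos rfl, sgn_mul_sgn]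
      rw [if_congr (idxEquiv_pos_iff p p' I) rfl rfl]
    · rw [if_neg (fun hc => hIJ ((idxEquiv p p').injective hc)), if_neg hIJ]
  refine ⟨⟨bF, hb⟩, ?_⟩
  constructor
  · -- positivity implies definiteness of signs
    intro hpos
    by_contra hcon
    push_neg at hcon
    obtain ⟨hp', hp⟩ := hcon
    have hlt : (p * (p + 1) + p' * (p' + 1)) / 2
        < (p * (p + 1) + p' * (p' + 1)) / 2 + p * p' :=
      Nat.lt_add_of_pos_right (Nat.mul_pos (Nat.pos_of_ne_zero hp) (Nat.pos_of_ne_zero hp'))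
    have hsymm : (bF ⟨_, hlt⟩ : Matrix (Fin (p + p')) (Fin (p + p')) ℝ).IsSymm :=
      (bF ⟨_, hlt⟩).2
    have hne : (bF ⟨_, hlt⟩ : Matrix (Fin (p + p')) (Fin (p + p')) ℝ) ≠ 0 := by
      intro hc
      exact bF.ne_zero ⟨_, hlt⟩ (by exact_mod_cast Subtype.ext hc)
    have h0 := hpos _ hsymm hne
    rw [hb ⟨_, hlt⟩ ⟨_, hlt⟩, if_pos rfl, if_neg (by simp)] at h0
    linarith
  · -- definiteness of signs implies positivity
    intro hor X hXs hX0
    have hXs' : Xᵀ = X := hXs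
    set x : symMat (p + p') := ⟨X, hXs'⟩ with hxdef
    have hx : X = ∑ I, bF.repr x I • (bF I : Matrix (Fin (p + p')) (Fin (p + p')) ℝ) := by
      have h1 : (x : Matrix (Fin (p + p')) (Fin (p + p')) ℝ)
          = ((∑ I, bF.repr x I • bF I : symMat (p + p'))
              : Matrix (Fin (p + p')) (Fin (p + p')) ℝ) := by
        rw [bF.sum_repr x]
      calc X = (x : Matrix (Fin (p + p')) (Fin (p + p')) ℝ) := rfl
        _ = _ := by
          rw [h1]
          push_cast
          rfl
    have expand : Qform A X X
        = ∑ I, bF.repr x I * (bF.repr x I *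
            (if (I : ℕ) < (p * (p + 1) + p' * (p' + 1)) / 2 then (1:ℝ) else -1)) := by
      conv_lhs => rw [hx]
      rw [Qform_sum_left]
      refine Finset.sum_congr rfl fun I _ => ?_
      rw [Qform_smul_left, Qform_sum_right]
      simp_rw [Qform_smul_right, hb I]
      rw [Finset.mul_sum]
      rw [Finset.sum_eq_single I]
      · rw [if_pos rfl]
      · intro J _ hJ
        rw [if_neg (Ne.symm hJ)]
        ring
      · simp
    have hz : p * p' = 0 := by
      rcases hor with h | h <;> simp [h]
    have hsign : ∀ I : Fin ((p * (p + 1) + p' * (p' + 1)) / 2 + p * p'),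
        (if (I : ℕ) < (p * (p + 1) + p' * (p' + 1)) / 2 then (1:ℝ) else -1) = 1 := by
      intro I
      have h2 : (I : ℕ) < (p * (p + 1) + p' * (p' + 1)) / 2 :=
        lt_of_lt_of_le I.isLt (by rw [hz, Nat.add_zero])
      rw [if_pos h2]
    rw [expand]
    have hxne : x ≠ 0 := by
      intro hc
      apply hX0
      have : (x : Matrix (Fin (p + p')) (Fin (p + p')) ℝ) = 0 := by rw [hc]; rfl
      exact this
    have hrne : bF.repr x ≠ 0 := fun hc => hxne (by simpa using (bF.repr.map_eq_zero_iff).mp hc)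
    obtain ⟨I0, hI0⟩ : ∃ I, bF.repr x I ≠ 0 := by
      by_contra hall
      push_neg at hall
      exact hrne (Finsupp.ext hall)
    apply Finset.sum_pos'
    · intro I _
      rw [hsign I, mul_one]
      exact mul_self_nonneg _
    · refine ⟨I0, Finset.mem_univ _, ?_⟩
      rw [hsign I0, mul_one]
      exact mul_self_pos.mpr hI0
end
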